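/- arXiv:2012.07690 — 3 statements merged into one kernel-verified Lean document; each statement's English description precedes it below -/
import Mathlib

section
/- Let m ≥ 1 be a positive integer and let X be a real-valued random variable such that for every ε > 0, P(X ≥ ε) ≤ exp(−2 m ε²) and P(X ≤ −ε) ≤ exp(−2 m ε²). Then E[exp(2 (m − 1) X²)] ≤ 2 m. -/
open MeasureTheory

/-- If a real random variable `X` has sub-Gaussian-type two-sided tails
`P(X ≥ ε) ≤ exp(-2 m ε²)` and `P(X ≤ -ε) ≤ exp(-2 m ε²)` for all `ε > 0` (with `m ≥ 1`),
then `E[exp(2 (m - 1) X²)] ≤ 2 m`. -/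
theorem tail_bound_exp_moment {Ω : Type*} [MeasurableSpace Ω]
    (μ : Measure Ω) [IsProbabilityMeasure μ] (X : Ω → ℝ) (hX : Measurable X)
    (m : ℕ) (hm : 1 ≤ m)
    (htail_right : ∀ ε : ℝ, 0 < ε →
      μ {ω | X ω ≥ ε} ≤ ENNReal.ofReal (Real.exp (-2 * (m : ℝ) * ε ^ 2)))
    (htail_left : ∀ ε : ℝ, 0 < ε →
      μ {ω | X ω ≤ -ε} ≤ ENNReal.ofReal (Real.exp (-2 * (m : ℝ) * ε ^ 2))) :
    ∫⁻ ω, ENNReal.ofReal (Real.exp (2 * ((m : ℝ) - 1) * X ω ^ 2)) ∂μ ≤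
      ENNReal.ofReal (2 * (m : ℝ)) := by
  rcases eq_or_lt_of_le hm with h1 | h2
  · -- m = 1
    have : ∀ ω, (2 : ℝ) * ((m : ℝ) - 1) * X ω ^ 2 = 0 := by
      intro ω; rw [← h1]; push_cast; ring
    simp only [this, Real.exp_zero, ENNReal.ofReal_one, lintegral_one, measure_univ, one_mul]
    rw [← h1]
    norm_num
  · -- 2 ≤ m
    have hm2 : (2 : ℝ) ≤ (m : ℝ) := by exact_mod_cast h2
    set c : ℝ := 2 * ((m : ℝ) - 1) with hc_def
    have hc : 0 < c := by simp only [hc_def]; linarith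
    set p : ℝ := (m : ℝ) / ((m : ℝ) - 1) with hp_def
    have hm1 : (0:ℝ) < (m : ℝ) - 1 := by linarith
    have hp1 : 1 < p := by
      rw [hp_def, lt_div_iff₀ hm1]; linarith
    -- layer cake
    rw [lintegral_eq_lintegral_meas_lt μ
      (Filter.Eventually.of_forall fun ω => (Real.exp_pos _).le)
      ((((hX.pow_const 2).const_mul _).exp).aemeasurable)]
    -- split domain
    have hsplit : Set.Ioi (0:ℝ) = Set.Ioc 0 1 ∪ Set.Ioi 1 := by
      rw [Set.Ioc_union_Ioi_eq_Ioi zero_le_one]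
    rw [hsplit, lintegral_union measurableSet_Ioi (Set.Ioc_disjoint_Ioi le_rfl)]
    have h1le : ∫⁻ t in Set.Ioc (0:ℝ) 1, μ {a | t < Real.exp (c * X a ^ 2)} ≤ 1 := by
      calc ∫⁻ t in Set.Ioc (0:ℝ) 1, μ {a | t < Real.exp (c * X a ^ 2)}
          ≤ ∫⁻ _ in Set.Ioc (0:ℝ) 1, 1 := by
            exact lintegral_mono fun t => prob_le_one
        _ = 1 := by simp
    have h2le : ∫⁻ t in Set.Ioi (1:ℝ), μ {a | t < Real.exp (c * X a ^ 2)}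
        ≤ ENNReal.ofReal (2 * ((m:ℝ) - 1)) := by
      have hbound : ∀ t ∈ Set.Ioi (1:ℝ),
          μ {a | t < Real.exp (c * X a ^ 2)} ≤ ENNReal.ofReal (2 * t ^ (-p)) := by
        intro t ht
        have ht1 : (1:ℝ) < t := ht
        have hlt : 0 < Real.log t := Real.log_pos ht1
        set ε : ℝ := Real.sqrt (Real.log t / c) with hε_def
        have hε : 0 < ε := Real.sqrt_pos.mpr (div_pos hlt hc)
        have hε2 : ε ^ 2 = Real.log t / c := Real.sq_sqrt (div_pos hlt hc).le
        have hsub : {a | t < Real.exp (c * X a ^ 2)} ⊆ {ω | X ω ≥ ε} ∪ {ω | X ω ≤ -ε} := by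
          intro a ha
          have h1 : Real.log t < c * X a ^ 2 := by
            have := Real.log_lt_log (by linarith) ha
            rwa [Real.log_exp] at this
          have h2 : ε ^ 2 < X a ^ 2 := by
            rw [hε2, div_lt_iff₀ hc]; linarith [h1]
          have h3 : ε < |X a| :=
            lt_of_pow_lt_pow_left₀ 2 (abs_nonneg _) (by rwa [sq_abs])
          rcases lt_abs.mp h3 with h | h
          · exact Or.inl h.le
          · refine Or.inr ?_
            show X a ≤ -ε
            linarith
        have hexp : Real.exp (-2 * (m:ℝ) * ε ^ 2) = t ^ (-p) := by
          rw [hε2, Real.rpow_def_of_pos (by linarith : (0:ℝ) < t)]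
          congr 1
          rw [hp_def, hc_def]
          field_simp
        calc μ {a | t < Real.exp (c * X a ^ 2)}
            ≤ μ ({ω | X ω ≥ ε} ∪ {ω | X ω ≤ -ε}) := measure_mono hsub
          _ ≤ μ {ω | X ω ≥ ε} + μ {ω | X ω ≤ -ε} := measure_union_le _ _
          _ ≤ ENNReal.ofReal (Real.exp (-2 * (m:ℝ) * ε ^ 2))
              + ENNReal.ofReal (Real.exp (-2 * (m:ℝ) * ε ^ 2)) :=
              add_le_add (htail_right ε hε) (htail_left ε hε)
          _ = ENNReal.ofReal (2 * t ^ (-p)) := by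
              rw [hexp, ← ENNReal.ofReal_add (Real.rpow_nonneg (by linarith) _)
                (Real.rpow_nonneg (by linarith) _)]
              ring_nf
        done
      calc ∫⁻ t in Set.Ioi (1:ℝ), μ {a | t < Real.exp (c * X a ^ 2)}
          ≤ ∫⁻ t in Set.Ioi (1:ℝ), ENNReal.ofReal (2 * t ^ (-p)) :=
            setLIntegral_mono_ae (by fun_prop) (Filter.Eventually.of_forall hbound)
        _ = ENNReal.ofReal (∫ t in Set.Ioi (1:ℝ), 2 * t ^ (-p)) := by
            rw [← ofReal_integral_eq_lintegral_ofReal]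
            · exact ((integrableOn_Ioi_rpow_of_lt (by linarith) one_pos).const_mul 2)
            · exact Filter.eventually_of_mem (self_mem_ae_restrict measurableSet_Ioi)
                fun t ht => mul_nonneg (by norm_num)
                  (Real.rpow_nonneg (by have := ht.out; linarith) _)
        _ = ENNReal.ofReal (2 * ((m:ℝ) - 1)) := by
            rw [MeasureTheory.integral_const_mul, integral_Ioi_rpow_of_lt (by linarith) one_pos]
            congr 1
            rw [Real.one_rpow]
            have : -p + 1 = -(1 / ((m:ℝ) - 1)) := by
              rw [hp_def]; field_simp; ring
            rw [this]
            field_simp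
    calc _ ≤ 1 + ENNReal.ofReal (2 * ((m:ℝ) - 1)) := add_le_add h1le h2le
      _ = ENNReal.ofReal (1 + 2 * ((m:ℝ) - 1)) := by
          rw [ENNReal.ofReal_add (by norm_num) (by linarith), ENNReal.ofReal_one]
      _ ≤ ENNReal.ofReal (2 * (m:ℝ)) := ENNReal.ofReal_le_ofReal (by linarith)
end

section
/- (KL divergence of a conditioned posterior.) Let P and Q be probability measures on a measurable space, let 𝒞 be a measurable set with Z := Q(𝒞) ≥ 1/2, and let Q̃ be the conditional probability measure Q̃(·) = Q(· ∩ 𝒞)/Z. Then D_KL(Q̃ ‖ P) ≤ 2 D_KL(Q ‖ P) + 2 log 2. -/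
open MeasureTheory
open scoped ENNReal

open Classical in
/-- The Kullback–Leibler divergence `D_KL(Q ‖ P) = ∫ log (dQ/dP) dQ`, valued in `ℝ≥0∞`,
defined to be `∞` when `Q` is not absolutely continuous with respect to `P`
(or when the log-likelihood ratio is not integrable). -/
noncomputable def klDiv {α : Type*} [MeasurableSpace α] (Q P : Measure α) : ℝ≥0∞ :=
  if Q ≪ P ∧ Integrable (fun x => Real.log ((Q.rnDeriv P x).toReal)) Q then
    ENNReal.ofReal (∫ x, Real.log ((Q.rnDeriv P x).toReal) ∂Q)
  else ⊤


/-- Tangent-line inequality for the convex function `t ↦ t * log t`. -/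
lemma klAux_tangent {t c : ℝ} (ht : 0 ≤ t) (hc : 0 < c) :
    (Real.log c + 1) * t - c ≤ t * Real.log t := by
  rcases eq_or_lt_of_le ht with h | h
  · simp [← h]
    linarith
  · have h1 : Real.log (c / t) ≤ c / t - 1 := Real.log_le_sub_one_of_pos (by positivity)
    have h2 : Real.log (c / t) = Real.log c - Real.log t := Real.log_div hc.ne' h.ne'
    have h3 : t * (c / t - 1) = c - t := by field_simp
    nlinarith [mul_le_mul_of_nonneg_left h1 h.le]

/-- Entropy-type inequality. -/
lemma klAux_ent {x : ℝ} (hx : 0 ≤ x) :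
    -(x * Real.log x) ≤ 1 / 2 - x + x * Real.log 2 := by
  have := klAux_tangent hx (c := 1/2) (by norm_num)
  have hl : Real.log (1/2) = -Real.log 2 := by
    rw [one_div, Real.log_inv]
  nlinarith

/-- Lower bound for a set integral of the log-likelihood ratio. -/
lemma klAux_setIntegral_ge {α : Type*} [MeasurableSpace α] (P Q : Measure α)
    [IsFiniteMeasure P] [IsFiniteMeasure Q] (hac : Q ≪ P)
    (hint : Integrable (fun x => Real.log ((Q.rnDeriv P x).toReal)) Q)
    {S : Set α} (hS : MeasurableSet S) {c : ℝ} (hc : 0 < c) :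
    (Real.log c + 1) * (Q S).toReal - c * (P S).toReal
      ≤ ∫ x in S, Real.log ((Q.rnDeriv P x).toReal) ∂Q := by
  have hchg : ∫ x in S, (Q.rnDeriv P x).toReal • Real.log ((Q.rnDeriv P x).toReal) ∂P
      = ∫ x in S, Real.log ((Q.rnDeriv P x).toReal) ∂Q :=
    setIntegral_rnDeriv_smul hac hS
  rw [← hchg]
  have hint1 : Integrable (fun x => (Real.log c + 1) * (Q.rnDeriv P x).toReal - c)
      (P.restrict S) :=
    (((Measure.integrable_toReal_rnDeriv (μ := Q) (ν := P)).const_mul _).sub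
      (integrable_const c)).restrict
  have hint2 : Integrable
      (fun x => (Q.rnDeriv P x).toReal • Real.log ((Q.rnDeriv P x).toReal)) (P.restrict S) :=
    ((integrable_rnDeriv_smul_iff hac).mpr hint).restrict
  have hmono : ∫ x in S, ((Real.log c + 1) * (Q.rnDeriv P x).toReal - c) ∂P
      ≤ ∫ x in S, (Q.rnDeriv P x).toReal • Real.log ((Q.rnDeriv P x).toReal) ∂P := by
    refine integral_mono hint1 hint2 fun x => ?_
    simpa using klAux_tangent ENNReal.toReal_nonneg hc
  refine le_trans (le_of_eq ?_) hmono
  rw [integral_sub ((Measure.integrable_toReal_rnDeriv (μ := Q) (ν := P)).const_mul _).restrict (integrable_const c),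
    integral_const_mul, Measure.setIntegral_toReal_rnDeriv hac S, setIntegral_const]
  simp [smul_eq_mul, mul_comm]
  rfl

/-- KL divergence of a conditioned posterior: if `Z = Q(𝒞) ≥ 1/2` and
`Q̃ = Q(· ∩ 𝒞)/Z` is the conditional measure, then
`D_KL(Q̃ ‖ P) ≤ 2 D_KL(Q ‖ P) + 2 log 2`. -/
theorem klDiv_conditioned_le {α : Type*} [MeasurableSpace α]
    (P Q : Measure α) [IsProbabilityMeasure P] [IsProbabilityMeasure Q]
    (C : Set α) (hC : MeasurableSet C) (hZ : (1 / 2 : ℝ≥0∞) ≤ Q C) :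
    klDiv ((Q C)⁻¹ • Q.restrict C) P ≤ 2 * klDiv Q P + ENNReal.ofReal (2 * Real.log 2) := by
  by_cases hQ : Q ≪ P ∧ Integrable (fun x => Real.log ((Q.rnDeriv P x).toReal)) Q
  case neg =>
    have h : klDiv Q P = ⊤ := by rw [klDiv]; exact if_neg hQ
    rw [h]
    simp [ENNReal.mul_top]
  obtain ⟨hac, hint⟩ := hQ
  set f : α → ℝ := fun x => (Q.rnDeriv P x).toReal with hf
  set Qt : Measure α := (Q C)⁻¹ • Q.restrict C with hQt
  -- basic facts about Z = Q C
  have hQC_ne_top : Q C ≠ ⊤ := measure_ne_top Q C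
  have hQC_ne_zero : Q C ≠ 0 := by
    intro h
    rw [h] at hZ
    simp at hZ
  set Z : ℝ := (Q C).toReal with hZdef
  set q : ℝ := (Q Cᶜ).toReal with hqdef
  have hZhalf : (1/2 : ℝ) ≤ Z := by
    rw [hZdef]
    rw [show (1/2 : ℝ) = ((1/2 : ℝ≥0∞)).toReal by simp]
    exact ENNReal.toReal_mono hQC_ne_top hZ
  have hZpos : (0:ℝ) < Z := by linarith
  have hZq : Z + q = 1 := by
    rw [hZdef, hqdef, ← ENNReal.toReal_add hQC_ne_top (measure_ne_top Q Cᶜ),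
      measure_add_measure_compl hC]
    simp
  have hq0 : 0 ≤ q := ENNReal.toReal_nonneg
  -- Qt is a probability measure
  haveI hQtprob : IsProbabilityMeasure Qt := by
    constructor
    rw [hQt, Measure.smul_apply, Measure.restrict_apply_univ, smul_eq_mul,
      ENNReal.inv_mul_cancel hQC_ne_zero hQC_ne_top]
  -- absolute continuity
  have hacR : Q.restrict C ≪ P := (Measure.absolutelyContinuous_of_le Measure.restrict_le_self).trans hac
  have hacT : Qt ≪ P := by
    refine Measure.AbsolutelyContinuous.mk fun s hs h0 => ?_
    rw [hQt, Measure.smul_apply, hacR h0]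
    simp
  have hacTQ : Qt ≪ Q := by
    refine Measure.AbsolutelyContinuous.mk fun s hs h0 => ?_
    rw [hQt, Measure.smul_apply, Measure.restrict_apply hs,
      measure_mono_null Set.inter_subset_left h0]
    simp
  -- the density of Qt
  have hmemC : ∀ᵐ x ∂Qt, x ∈ C := by
    rw [ae_iff]
    have : {x | ¬ x ∈ C} = Cᶜ := rfl
    rw [this, hQt, Measure.smul_apply, Measure.restrict_apply hC.compl]
    simp
  have hpos : ∀ᵐ x ∂Qt, 0 < Q.rnDeriv P x := hacTQ.ae_le (Measure.rnDeriv_pos hac)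
  have hlt : ∀ᵐ x ∂Qt, Q.rnDeriv P x < ⊤ := hacT.ae_le (Measure.rnDeriv_lt_top Q P)
  have hsmul : Qt.rnDeriv P =ᵐ[Qt] fun x => (Q C)⁻¹ * C.indicator (Q.rnDeriv P) x := by
    refine hacT.ae_le ?_
    filter_upwards [Measure.rnDeriv_smul_left_of_ne_top (Q.restrict C) P
        (r := (Q C)⁻¹) (by simp [hQC_ne_zero]),
      Measure.rnDeriv_restrict Q P hC] with x h1 h2
    rw [hQt, h1, Pi.smul_apply, h2, smul_eq_mul]
  have hderiv : (fun x => Real.log ((Qt.rnDeriv P x).toReal))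
      =ᵐ[Qt] (fun x => -Real.log Z + Real.log (f x)) := by
    filter_upwards [hmemC, hpos, hlt, hsmul] with x hx hp hl hs
    rw [hs, Set.indicator_of_mem hx, ENNReal.toReal_mul, ENNReal.toReal_inv]
    have hfx : 0 < f x := ENNReal.toReal_pos hp.ne' hl.ne
    rw [Real.log_mul (by positivity) hfx.ne', Real.log_inv]
  -- integrability over Qt
  have hint_f_Qt : Integrable (fun x => Real.log (f x)) Qt := by
    rw [hQt, integrable_smul_measure (by simp [hQC_ne_top]) (by simp [hQC_ne_zero])]
    exact hint.restrict
  have hint_g : Integrable (fun x => Real.log ((Qt.rnDeriv P x).toReal)) Qt :=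
    ((integrable_const (-Real.log Z)).add hint_f_Qt).congr hderiv.symm
  -- values of the KL divergences
  set A : ℝ := ∫ x in C, Real.log (f x) ∂Q with hA
  set B : ℝ := ∫ x in Cᶜ, Real.log (f x) ∂Q with hB
  set D : ℝ := ∫ x, Real.log (f x) ∂Q with hD
  have hABD : A + B = D := integral_add_compl hC hint
  have hklQ : klDiv Q P = ENNReal.ofReal D := by rw [klDiv]; exact if_pos ⟨hac, hint⟩
  have hklQt : klDiv Qt P = ENNReal.ofReal (-Real.log Z + Z⁻¹ * A) := by
    rw [klDiv, if_pos ⟨hacT, hint_g⟩, integral_congr_ae hderiv,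
      integral_add (integrable_const _) hint_f_Qt, integral_const]
    have : ∫ x, Real.log (f x) ∂Qt = Z⁻¹ * A := by
      rw [hQt, integral_smul_measure, ENNReal.toReal_inv, smul_eq_mul, hA]
    rw [this]
    simp
  -- lower bounds from the tangent inequality
  have hDpos : 0 ≤ D := by
    have := klAux_setIntegral_ge P Q hac hint MeasurableSet.univ (c := 1) one_pos
    simpa [hD] using this
  have hBlow : q * Real.log q ≤ B := by
    rcases eq_or_ne (Q Cᶜ) 0 with h0 | h0
    · have hB0 : B = 0 := by
        rw [hB, Measure.restrict_eq_zero.mpr h0, integral_zero_measure]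
      rw [hB0, hqdef, h0]
      simp
    · have hqpos : 0 < q := ENNReal.toReal_pos h0 (measure_ne_top Q Cᶜ)
      have := klAux_setIntegral_ge P Q hac hint hC.compl hqpos
      have hp1 : (P Cᶜ).toReal ≤ 1 := by
        rw [show (1:ℝ) = ((1:ℝ≥0∞)).toReal by simp]
        exact ENNReal.toReal_mono (by simp) prob_le_one
      nlinarith [ENNReal.toReal_nonneg (a := P Cᶜ)]
  -- entropy bound
  have hent : -(Z * Real.log Z) - q * Real.log q ≤ Real.log 2 := by
    have h1 := klAux_ent hZpos.le
    have h2 := klAux_ent hq0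
    have h3 : Z * Real.log 2 + q * Real.log 2 = Real.log 2 := by
      rw [← add_mul, hZq, one_mul]
    linarith
  have hlog2 : 0 ≤ Real.log 2 := Real.log_nonneg one_le_two
  -- the real inequality
  have hreal : -Real.log Z + Z⁻¹ * A ≤ 2 * D + 2 * Real.log 2 := by
    rw [← mul_le_mul_iff_right₀ hZpos]
    have h1 : Z * (-Real.log Z + Z⁻¹ * A) = -(Z * Real.log Z) + A := by
      field_simp
    rw [h1]
    nlinarith [mul_nonneg (by linarith : (0:ℝ) ≤ 2 * Z - 1) hDpos,
      mul_nonneg (by linarith : (0:ℝ) ≤ 2 * Z - 1) hlog2]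
  -- conclude
  rw [hklQt, hklQ]
  calc ENNReal.ofReal (-Real.log Z + Z⁻¹ * A)
      ≤ ENNReal.ofReal (2 * D + 2 * Real.log 2) := ENNReal.ofReal_le_ofReal hreal
    _ ≤ 2 * ENNReal.ofReal D + ENNReal.ofReal (2 * Real.log 2) := by
        rw [ENNReal.ofReal_add (by linarith) (by linarith),
          ENNReal.ofReal_mul (by norm_num)]
        simp [ENNReal.ofReal_ofNat]
end

section
/- (Bound on GCN node representations.) Consider an l-layer GCN as defined in the context with input node features X whose rows have ℓ2-norm at most B, on a simple graph with maximum node degree d − 1. Then for every layer index j with 1 ≤ j ≤ l − 1, the node representations satisfy max_i |H_j[i,:]|₂ ≤ d^{j/2} · B · Π_{i=1}^{j} ‖W_i‖₂. -/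
open Finset

/-- Euclidean (ℓ2) norm of a vector in `ℝ^q`. -/
noncomputable def l2norm {q : ℕ} (v : Fin q → ℝ) : ℝ := Real.sqrt (∑ j, v j ^ 2)

/-- Spectral norm of a real matrix: the operator norm induced by the Euclidean
vector norm, i.e. `sup {‖A v‖₂ : ‖v‖₂ ≤ 1}`. -/
noncomputable def specNorm {p q : ℕ} (A : Matrix (Fin p) (Fin q) ℝ) : ℝ :=
  sSup {r : ℝ | ∃ v : Fin q → ℝ, l2norm v ≤ 1 ∧ r = l2norm (A.mulVec v)}

/-- Frobenius norm of a real matrix. -/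
noncomputable def frobNorm {p q : ℕ} (A : Matrix (Fin p) (Fin q) ℝ) : ℝ :=
  Real.sqrt (∑ i, ∑ j, A i j ^ 2)

/-- `A` is the adjacency matrix of a simple undirected graph (0/1 entries, symmetric,
zero diagonal) with maximum node degree `d - 1`. -/
def IsSimpleAdj {n : ℕ} (d : ℕ) (A : Matrix (Fin n) (Fin n) ℝ) : Prop :=
  (∀ i j, A i j = 0 ∨ A i j = 1) ∧ (∀ i j, A i j = A j i) ∧ (∀ i, A i i = 0) ∧
    ∀ i, ∑ j, A i j ≤ (d : ℝ) - 1

/-- The normalized graph Laplacian `L = D^{-1/2} (A + I) D^{-1/2}` where `D` is the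
degree matrix of `Ã = A + I`; entrywise `L i j = Ã i j / (√(deg i) * √(deg j))`. -/
noncomputable def gLap {n : ℕ} (A : Matrix (Fin n) (Fin n) ℝ) :
    Matrix (Fin n) (Fin n) ℝ :=
  Matrix.of fun i j =>
    (A + 1) i j / (Real.sqrt (∑ k, (A + 1) i k) * Real.sqrt (∑ k, (A + 1) j k))

/-- ReLU nonlinearity. -/
def relu (x : ℝ) : ℝ := max 0 x

/-- Node representations of a GCN: `H 0 = X` and
`H (k+1) = ReLU(L̃ · H k · W k)` (entrywise ReLU), where `L̃ = gLap A`.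
Layer `k` (0-indexed) has weight `W k : ℝ^{dims k × dims (k+1)}`. -/
noncomputable def gcnH {n : ℕ} (A : Matrix (Fin n) (Fin n) ℝ) (dims : ℕ → ℕ)
    (W : (k : ℕ) → Matrix (Fin (dims k)) (Fin (dims (k + 1))) ℝ)
    (X : Matrix (Fin n) (Fin (dims 0)) ℝ) : (k : ℕ) → Matrix (Fin n) (Fin (dims k)) ℝ
  | 0 => X
  | (k + 1) => (gLap A * gcnH A dims W X k * W k).map relu

/-- Output of an `l`-layer GCN: the mean readout `(1/n) 1ₙ H_{l-1} W_l`
(with 0-indexed weights, the readout weight is `W (l-1)`). -/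
noncomputable def gcnOut {n : ℕ} (A : Matrix (Fin n) (Fin n) ℝ) (dims : ℕ → ℕ)
    (W : (k : ℕ) → Matrix (Fin (dims k)) (Fin (dims (k + 1))) ℝ)
    (X : Matrix (Fin n) (Fin (dims 0)) ℝ) (l : ℕ) : Fin (dims (l - 1 + 1)) → ℝ :=
  fun j => (1 / (n : ℝ)) * ∑ i, (gcnH A dims W X (l - 1) * W (l - 1)) i j

/- ## Auxiliary lemmas -/

lemma l2norm_eq_norm {q : ℕ} (v : Fin q → ℝ) :
    l2norm v = ‖(WithLp.equiv 2 (Fin q → ℝ)).symm v‖ := by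
  rw [EuclideanSpace.norm_eq]
  simp [l2norm, sq_abs]

lemma l2norm_nonneg' {q : ℕ} (v : Fin q → ℝ) : 0 ≤ l2norm v := Real.sqrt_nonneg _

lemma l2norm_smul {q : ℕ} (c : ℝ) (v : Fin q → ℝ) :
    l2norm (c • v) = |c| * l2norm v := by
  rw [l2norm_eq_norm, l2norm_eq_norm]
  rw [show (WithLp.equiv 2 (Fin q → ℝ)).symm (c • v)
      = c • (WithLp.equiv 2 (Fin q → ℝ)).symm v from rfl]
  rw [norm_smul]; rfl

lemma l2norm_eq_zero {q : ℕ} {v : Fin q → ℝ} (h : l2norm v = 0) : v = 0 := by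
  rw [l2norm_eq_norm, norm_eq_zero] at h
  exact congrArg (WithLp.equiv 2 (Fin q → ℝ)) h

lemma inner_le_l2 {q : ℕ} (u v : Fin q → ℝ) : ∑ i, u i * v i ≤ l2norm u * l2norm v := by
  rw [l2norm_eq_norm, l2norm_eq_norm]
  have := real_inner_le_norm ((WithLp.equiv 2 (Fin q → ℝ)).symm u)
    ((WithLp.equiv 2 (Fin q → ℝ)).symm v)
  simpa [PiLp.inner_apply, RCLike.inner_apply, mul_comm] using this

lemma abs_inner_le_l2 {q : ℕ} (u v : Fin q → ℝ) :
    |∑ i, u i * v i| ≤ l2norm u * l2norm v := by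
  rw [l2norm_eq_norm, l2norm_eq_norm]
  have := abs_real_inner_le_norm ((WithLp.equiv 2 (Fin q → ℝ)).symm u)
    ((WithLp.equiv 2 (Fin q → ℝ)).symm v)
  simpa [PiLp.inner_apply, RCLike.inner_apply, mul_comm] using this

lemma sq_l2norm {q : ℕ} (v : Fin q → ℝ) : l2norm v ^ 2 = ∑ j, v j ^ 2 :=
  Real.sq_sqrt (Finset.sum_nonneg fun _ _ => sq_nonneg _)

lemma l2norm_zero {q : ℕ} : l2norm (0 : Fin q → ℝ) = 0 := by
  simp [l2norm]

lemma l2norm_le_of_sq_le {q : ℕ} {v : Fin q → ℝ} {c : ℝ} (hc : 0 ≤ c)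
    (h : ∑ j, v j ^ 2 ≤ c ^ 2) : l2norm v ≤ c := by
  rw [l2norm]
  calc Real.sqrt (∑ j, v j ^ 2) ≤ Real.sqrt (c ^ 2) := Real.sqrt_le_sqrt h
  _ = c := Real.sqrt_sq hc

lemma frobNorm_nonneg {p q : ℕ} (A : Matrix (Fin p) (Fin q) ℝ) : 0 ≤ frobNorm A :=
  Real.sqrt_nonneg _

lemma mulVec_l2_le_frob {p q : ℕ} (A : Matrix (Fin p) (Fin q) ℝ) (v : Fin q → ℝ)
    (hv : l2norm v ≤ 1) : l2norm (A.mulVec v) ≤ frobNorm A := by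
  apply l2norm_le_of_sq_le (frobNorm_nonneg A)
  have hfs : frobNorm A ^ 2 = ∑ i, ∑ j, A i j ^ 2 :=
    Real.sq_sqrt (Finset.sum_nonneg fun _ _ => Finset.sum_nonneg fun _ _ => sq_nonneg _)
  rw [hfs]
  apply Finset.sum_le_sum
  intro i _
  have h1 : (A.mulVec v) i ^ 2 ≤ (l2norm (A i) * l2norm v) ^ 2 := by
    rw [← sq_abs ((A.mulVec v) i)]
    apply pow_le_pow_left₀ (abs_nonneg _)
    simpa [Matrix.mulVec, dotProduct] using abs_inner_le_l2 (A i) v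
  calc (A.mulVec v) i ^ 2 ≤ (l2norm (A i) * l2norm v) ^ 2 := h1
  _ = l2norm (A i) ^ 2 * l2norm v ^ 2 := by ring
  _ ≤ l2norm (A i) ^ 2 * 1 := by
      apply mul_le_mul_of_nonneg_left _ (sq_nonneg _)
      calc l2norm v ^ 2 ≤ 1 ^ 2 := pow_le_pow_left₀ (l2norm_nonneg' v) hv 2
      _ = 1 := one_pow 2
  _ = ∑ j, A i j ^ 2 := by rw [mul_one, sq_l2norm]

lemma specSet_bdd {p q : ℕ} (A : Matrix (Fin p) (Fin q) ℝ) :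
    BddAbove {r : ℝ | ∃ v : Fin q → ℝ, l2norm v ≤ 1 ∧ r = l2norm (A.mulVec v)} := by
  refine ⟨frobNorm A, ?_⟩
  rintro r ⟨v, hv, rfl⟩
  exact mulVec_l2_le_frob A v hv

lemma specNorm_nonneg {p q : ℕ} (A : Matrix (Fin p) (Fin q) ℝ) : 0 ≤ specNorm A := by
  apply le_csSup (specSet_bdd A)
  exact ⟨0, by rw [l2norm_zero]; exact zero_le_one, by rw [Matrix.mulVec_zero, l2norm_zero]⟩

lemma mulVec_le_specNorm {p q : ℕ} (A : Matrix (Fin p) (Fin q) ℝ) (v : Fin q → ℝ) :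
    l2norm (A.mulVec v) ≤ specNorm A * l2norm v := by
  rcases eq_or_ne v 0 with rfl | hv
  · rw [Matrix.mulVec_zero, l2norm_zero, l2norm_zero, mul_zero]
  · have hpos : 0 < l2norm v := by
      rcases lt_or_eq_of_le (l2norm_nonneg' v) with h | h
      · exact h
      · exact absurd (l2norm_eq_zero h.symm) hv
    have hu : l2norm ((l2norm v)⁻¹ • v) ≤ 1 := by
      rw [l2norm_smul, abs_of_nonneg (inv_nonneg.2 hpos.le), inv_mul_cancel₀ hpos.ne']
    have hmem : l2norm (A.mulVec ((l2norm v)⁻¹ • v)) ≤ specNorm A :=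
      le_csSup (specSet_bdd A) ⟨_, hu, rfl⟩
    rw [Matrix.mulVec_smul, l2norm_smul, abs_of_nonneg (inv_nonneg.2 hpos.le)] at hmem
    calc l2norm (A.mulVec v) = ((l2norm v)⁻¹ * l2norm (A.mulVec v)) * l2norm v := by
          field_simp
    _ ≤ specNorm A * l2norm v := mul_le_mul_of_nonneg_right hmem hpos.le

lemma vecMul_le_specNorm {p q : ℕ} (A : Matrix (Fin p) (Fin q) ℝ) (u : Fin p → ℝ) :
    l2norm (Matrix.vecMul u A) ≤ specNorm A * l2norm u := by
  set z := Matrix.vecMul u A with hz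
  have hzj : ∀ j, z j = ∑ i, u i * A i j := fun j => by
    simp [hz, Matrix.vecMul, dotProduct]
  have h1 : ∑ j, z j ^ 2 = ∑ i, u i * (A.mulVec z) i := by
    calc ∑ j, z j ^ 2 = ∑ j, ∑ i, u i * A i j * z j := by
          refine Finset.sum_congr rfl fun j _ => ?_
          rw [pow_two]
          conv_rhs => rw [← Finset.sum_mul, ← hzj j]
    _ = ∑ i, ∑ j, u i * A i j * z j := Finset.sum_comm
    _ = ∑ i, u i * (A.mulVec z) i := by
          refine Finset.sum_congr rfl fun i _ => ?_
          simp [Matrix.mulVec, dotProduct, Finset.mul_sum, mul_assoc]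
  have key : l2norm z ^ 2 ≤ l2norm u * (specNorm A * l2norm z) := by
    rw [sq_l2norm, h1]
    calc ∑ i, u i * (A.mulVec z) i ≤ l2norm u * l2norm (A.mulVec z) := inner_le_l2 u _
    _ ≤ l2norm u * (specNorm A * l2norm z) :=
        mul_le_mul_of_nonneg_left (mulVec_le_specNorm A z) (l2norm_nonneg' u)
  rcases eq_or_lt_of_le (l2norm_nonneg' z) with h0 | h0
  · rw [← h0]
    exact mul_nonneg (specNorm_nonneg A) (l2norm_nonneg' u)
  · rw [pow_two] at key
    have h2 : l2norm z * l2norm z ≤ (specNorm A * l2norm u) * l2norm z := by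
      calc l2norm z * l2norm z ≤ l2norm u * (specNorm A * l2norm z) := key
      _ = (specNorm A * l2norm u) * l2norm z := by ring
    exact le_of_mul_le_mul_right h2 h0

lemma l2norm_relu_le {q : ℕ} (v : Fin q → ℝ) :
    l2norm (fun j => relu (v j)) ≤ l2norm v := by
  apply Real.sqrt_le_sqrt
  apply Finset.sum_le_sum
  intro j _
  rw [← sq_abs (v j)]
  apply pow_le_pow_left₀ (le_max_left 0 (v j))
  exact max_le (abs_nonneg _) (le_abs_self _)

lemma l2norm_sum_le {q : ℕ} {ι : Type*} (s : Finset ι) (f : ι → Fin q → ℝ) :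
    l2norm (∑ k ∈ s, f k) ≤ ∑ k ∈ s, l2norm (f k) := by
  classical
  induction s using Finset.induction_on with
  | empty => simp [l2norm_zero]
  | insert _ _ h ih =>
    rename_i a s
    rw [Finset.sum_insert h, Finset.sum_insert h]
    calc l2norm (f a + ∑ k ∈ s, f k)
        ≤ l2norm (f a) + l2norm (∑ k ∈ s, f k) := by
          rw [l2norm_eq_norm, l2norm_eq_norm, l2norm_eq_norm]
          exact norm_add_le _ _
    _ ≤ l2norm (f a) + ∑ k ∈ s, l2norm (f k) := by linarith

lemma gLap_facts {n : ℕ} {d : ℕ} {A : Matrix (Fin n) (Fin n) ℝ} (hA : IsSimpleAdj d A) :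
    ∀ i : Fin n, (∀ j, 0 ≤ gLap A i j) ∧ ∑ j, gLap A i j ≤ Real.sqrt d := by
  obtain ⟨h01, _, _, hdeg⟩ := hA
  have hAnn : ∀ i j, 0 ≤ A i j := by
    intro i j; rcases h01 i j with h | h <;> rw [h] <;> norm_num
  set deg : Fin n → ℝ := fun i => ∑ k, (A + 1) i k with hdegdef
  have hAt : ∀ i k, (A + 1) i k = A i k + if i = k then 1 else 0 := by
    intro i k; simp [Matrix.add_apply, Matrix.one_apply]
  have hAtnn : ∀ i k, 0 ≤ (A + 1) i k := by
    intro i k; rw [hAt]; have := hAnn i k; split <;> linarith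
  have hdeg_eq : ∀ i, deg i = (∑ k, A i k) + 1 := by
    intro i
    simp only [hdegdef]
    rw [show (∑ k, (A + 1) i k) = ∑ k, (A i k + if i = k then 1 else 0) from
      Finset.sum_congr rfl fun k _ => hAt i k]
    rw [Finset.sum_add_distrib, Finset.sum_ite_eq]
    simp
  have hdeg1 : ∀ i, 1 ≤ deg i := by
    intro i; rw [hdeg_eq]
    have : 0 ≤ ∑ k, A i k := Finset.sum_nonneg fun k _ => hAnn i k
    linarith
  have hdegd : ∀ i, deg i ≤ d := by
    intro i; rw [hdeg_eq]
    have := hdeg i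
    linarith
  have hsq1 : ∀ i, 1 ≤ Real.sqrt (deg i) := fun i => by
    rw [show (1:ℝ) = Real.sqrt 1 from (Real.sqrt_one).symm]
    exact Real.sqrt_le_sqrt (hdeg1 i)
  have hsqpos : ∀ i, 0 < Real.sqrt (deg i) := fun i => lt_of_lt_of_le one_pos (hsq1 i)
  intro i
  constructor
  · intro j
    exact div_nonneg (hAtnn i j) (mul_nonneg (Real.sqrt_nonneg _) (Real.sqrt_nonneg _))
  · have step1 : ∑ j, gLap A i j ≤ ∑ j, (A + 1) i j / Real.sqrt (deg i) := by
      apply Finset.sum_le_sum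
      intro j _
      show (A + 1) i j / (Real.sqrt (deg i) * Real.sqrt (deg j)) ≤ _
      apply div_le_div_of_nonneg_left (hAtnn i j) (hsqpos i)
      calc Real.sqrt (deg i) = Real.sqrt (deg i) * 1 := (mul_one _).symm
      _ ≤ Real.sqrt (deg i) * Real.sqrt (deg j) :=
          mul_le_mul_of_nonneg_left (hsq1 j) (hsqpos i).le
    calc ∑ j, gLap A i j ≤ ∑ j, (A + 1) i j / Real.sqrt (deg i) := step1
    _ = deg i / Real.sqrt (deg i) := by rw [← Finset.sum_div]
    _ = Real.sqrt (deg i) := Real.div_sqrt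
    _ ≤ Real.sqrt d := Real.sqrt_le_sqrt (hdegd i)

lemma gcn_hidden_bound_aux {n : ℕ} (d : ℕ) (B : ℝ) (hB : 0 < B)
    (A : Matrix (Fin n) (Fin n) ℝ) (hA : IsSimpleAdj d A)
    (dims : ℕ → ℕ) (W : (k : ℕ) → Matrix (Fin (dims k)) (Fin (dims (k + 1))) ℝ)
    (X : Matrix (Fin n) (Fin (dims 0)) ℝ) (hX : ∀ i, l2norm (X i) ≤ B)
    (j : ℕ) :
    ∀ i, l2norm (gcnH A dims W X j i) ≤
      (Real.sqrt d) ^ j * B * ∏ k ∈ Finset.range j, specNorm (W k) := by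
  induction j with
  | zero => intro i; simpa [gcnH] using hX i
  | succ j ih =>
    intro i
    set Cj : ℝ := (Real.sqrt d) ^ j * B * ∏ k ∈ Finset.range j, specNorm (W k) with hCj
    have hCjnn : 0 ≤ Cj := by
      apply mul_nonneg (mul_nonneg (pow_nonneg (Real.sqrt_nonneg _) _) hB.le)
      exact Finset.prod_nonneg fun k _ => specNorm_nonneg (W k)
    set Hj := gcnH A dims W X j with hHj
    have hrow : gcnH A dims W X (j + 1) i
        = fun c => relu ((gLap A * Hj * W j) i c) := rfl
    have hmulrow : (gLap A * Hj * W j) i = Matrix.vecMul ((gLap A * Hj) i) (W j) := by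
      ext c
      simp [Matrix.mul_apply, Matrix.vecMul, dotProduct]
    have hLrow : (gLap A * Hj) i = ∑ k, gLap A i k • Hj k := by
      ext c
      simp [Matrix.mul_apply, Finset.sum_apply]
    obtain ⟨hLnn, hLsum⟩ := gLap_facts hA i
    have hLnorm : l2norm ((gLap A * Hj) i) ≤ Real.sqrt d * Cj := by
      rw [hLrow]
      calc l2norm (∑ k, gLap A i k • Hj k)
          ≤ ∑ k, l2norm (gLap A i k • Hj k) := l2norm_sum_le _ _
      _ = ∑ k, gLap A i k * l2norm (Hj k) := by
          refine Finset.sum_congr rfl fun k _ => ?_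
          rw [l2norm_smul, abs_of_nonneg (hLnn k)]
      _ ≤ ∑ k, gLap A i k * Cj := by
          refine Finset.sum_le_sum fun k _ => ?_
          exact mul_le_mul_of_nonneg_left (ih k) (hLnn k)
      _ = (∑ k, gLap A i k) * Cj := by rw [Finset.sum_mul]
      _ ≤ Real.sqrt d * Cj := mul_le_mul_of_nonneg_right hLsum hCjnn
    calc l2norm (gcnH A dims W X (j + 1) i)
        ≤ l2norm ((gLap A * Hj * W j) i) := by rw [hrow]; exact l2norm_relu_le _
    _ ≤ specNorm (W j) * l2norm ((gLap A * Hj) i) := by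
        rw [hmulrow]; exact vecMul_le_specNorm _ _
    _ ≤ specNorm (W j) * (Real.sqrt d * Cj) :=
        mul_le_mul_of_nonneg_left hLnorm (specNorm_nonneg _)
    _ = (Real.sqrt d) ^ (j + 1) * B * ∏ k ∈ Finset.range (j + 1), specNorm (W k) := by
        rw [Finset.prod_range_succ, hCj]
        ring

/-- Bound on GCN node representations: for every layer `1 ≤ j ≤ l - 1` and every node `i`,
`|H_j[i,:]|₂ ≤ d^{j/2} · B · ∏_{i=1}^{j} ‖W_i‖₂`. -/
theorem gcn_hidden_bound {n : ℕ} (d l : ℕ) (hl : 1 < l) (B : ℝ) (hB : 0 < B)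
    (A : Matrix (Fin n) (Fin n) ℝ) (hA : IsSimpleAdj d A)
    (dims : ℕ → ℕ) (W : (k : ℕ) → Matrix (Fin (dims k)) (Fin (dims (k + 1))) ℝ)
    (X : Matrix (Fin n) (Fin (dims 0)) ℝ) (hX : ∀ i, l2norm (X i) ≤ B)
    (j : ℕ) (hj1 : 1 ≤ j) (hj2 : j ≤ l - 1) :
    ∀ i, l2norm (gcnH A dims W X j i) ≤
      (d : ℝ) ^ ((j : ℝ) / 2) * B * ∏ k ∈ Finset.range j, specNorm (W k) := by
  have hrp : (d : ℝ) ^ ((j : ℝ) / 2) = (Real.sqrt d) ^ j := by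
    rw [Real.sqrt_eq_rpow, ← Real.rpow_natCast ((d:ℝ) ^ ((1:ℝ)/2)) j,
      ← Real.rpow_mul (by positivity)]
    congr 1
    ring
  rw [hrp]
  exact gcn_hidden_bound_aux d B hB A hA dims W X hX j
end
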